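/- Let EF be an evolution frame in which strong equivalence has finite index c on the set of descendants of a knowledge state s. If some infinite path p starting at s satisfies the until formula φ₁ U φ₂ (for state formulas φ₁, φ₂), then there exists a path p' starting at s of length at most c satisfying φ₁ U φ₂; dually, if some infinite path starting at s falsifies φ₁ U φ₂, then some path of length at most c starting at s falsifies it. Hence EF, s ⊨ E(φ₁ U φ₂) and EF, s ⊨ A(φ₁ U φ₂) can each be decided by examining only paths of length at most c. -/

import Mathlib

mutual
inductive SForm (Rule : Type) : Type
  | atom : Rule → SForm Rule
  | conj : SForm Rule → SForm Rule → SForm Rule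
  | nnot : SForm Rule → SForm Rule
  | ex : EForm Rule → SForm Rule
  | all : EForm Rule → SForm Rule
inductive EForm (Rule : Type) : Type
  | next : SForm Rule → EForm Rule
  | untl : SForm Rule → SForm Rule → EForm Rule
end

/-- A path in a transition system. -/
def IsPath {σ : Type} (R : σ → σ → Prop) (p : ℕ → σ) : Prop :=
  ∀ i, R (p i) (p (i + 1))

mutual
/-- Satisfaction of EKBL state formulas over a Kripke-style structure with
    states `σ`, transition relation `R`, and labelling `L`. -/
def SatS {Rule σ : Type} (R : σ → σ → Prop) (L : σ → Set Rule) : σ → SForm Rule → Prop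
  | s, .atom r => r ∈ L s
  | s, .conj φ ψ => SatS R L s φ ∧ SatS R L s ψ
  | s, .nnot φ => ¬ SatS R L s φ
  | s, .ex φ => ∃ p : ℕ → σ, IsPath R p ∧ p 0 = s ∧ SatE R L p φ
  | s, .all φ => ∀ p : ℕ → σ, IsPath R p → p 0 = s → SatE R L p φ
/-- Satisfaction of EKBL evolution formulas along a path. -/
def SatE {Rule σ : Type} (R : σ → σ → Prop) (L : σ → Set Rule) : (ℕ → σ) → EForm Rule → Prop
  | p, .next φ => SatS R L (p 1) φ
  | p, .untl φ ψ => ∃ i, SatS R L (p i) ψ ∧ ∀ j, j < i → SatS R L (p j) φ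
end

structure KState (Rule Event : Type) : Type where
  kb : Set Rule
  events : List Event

/-- Append a sequence of events to a knowledge state. -/
def KState.append {Rule Event : Type} (s : KState Rule Event) (es : List Event) :
    KState Rule Event := ⟨s.kb, s.events ++ es⟩

/-- All events of the list belong to the event class `EC`. -/
def InEC {Event : Type} (EC : Set Event) (es : List Event) : Prop := ∀ E ∈ es, E ∈ EC

/-- Successor relation on knowledge states induced by the event class `EC`. -/
def Succ {Rule Event : Type} (EC : Set Event) (s s' : KState Rule Event) : Prop :=
  ∃ E ∈ EC, s' = s.append [E]

/-- Strong equivalence of knowledge states with respect to belief operator `B`. -/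
def StrongEquiv {Rule Event : Type} (B : KState Rule Event → Set Rule) (EC : Set Event)
    (s s' : KState Rule Event) : Prop :=
  ∀ es : List Event, InEC EC es → B (s.append es) = B (s'.append es)

/-- k-equivalence of knowledge states. -/
def KEquiv {Rule Event : Type} (B : KState Rule Event → Set Rule) (EC : Set Event) (k : ℕ)
    (s s' : KState Rule Event) : Prop :=
  ∀ es : List Event, InEC EC es → es.length ≤ k → B (s.append es) = B (s'.append es)

/-- The equivalence class of `s` within `S` under the relation `R`. -/
def cls {α : Type} (R : α → α → Prop) (S : Set α) (s : α) : Set α := {t ∈ S | R s t}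

/-- The set of descendants of `s` (including `s` itself). -/
def dsc {Rule Event : Type} (EC : Set Event) (s : KState Rule Event) :
    Set (KState Rule Event) :=
  {t | ∃ es : List Event, InEC EC es ∧ t = s.append es}

/-
Strongly equivalent knowledge states have the same beliefs and, event by event, strongly
equivalent successors; hence a path can be re-routed through strongly equivalent states without
changing which state formulas hold along it. With at most `c` classes, any `c + 1` consecutive
states of a path from `s` contain two equivalent ones, `p j` and `p k` with `j < k ≤ c`. A witness
for `φ₁ U φ₂` beyond position `c` is moved earlier by cutting out `p j, …, p (k - 1)`; a path with
no witness up to `c` either falsifies `φ₁` within `c` steps, or can be replaced by the lasso that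
repeats `p j, …, p (k - 1)` forever and so never reaches `φ₂`.
-/

theorem exists_lt_le_rel_of_ncard_image_cls_le {α : Type} {R : α → α → Prop} (hR : ∀ a, R a a)
    {S : Set α} {c : ℕ} (hfin : (cls R S '' S).Finite) (hc : (cls R S '' S).ncard ≤ c)
    {f : ℕ → α} (hf : ∀ n, f n ∈ S) : ∃ j k, j < k ∧ k ≤ c ∧ R (f j) (f k) := by
  have rel_of_cls_eq : ∀ x y, cls R S (f x) = cls R S (f y) → R (f x) (f y) := by
    intro x y hxy
    have hy : f y ∈ cls R S (f x) := hxy ▸ ⟨hf y, hR _⟩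
    exact hy.2
  obtain ⟨x, hx, y, hy, hxy, hcls⟩ := Set.exists_ne_map_eq_of_ncard_lt_of_maps_to
    (s := Set.Iic c) (by rw [Set.ncard_Iic_nat]; omega)
    (fun n _ => Set.mem_image_of_mem (cls R S) (hf n)) hfin
  rcases hxy.lt_or_gt with h | h
  · exact ⟨x, y, h, hy, rel_of_cls_eq x y hcls⟩
  · exact ⟨y, x, h, hx, rel_of_cls_eq y x hcls.symm⟩

namespace KState

variable {Rule Event : Type}

@[simp]
theorem append_nil (s : KState Rule Event) : s.append [] = s := by
  simp [KState.append]

@[simp]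
theorem append_append (s : KState Rule Event) (es fs : List Event) :
    (s.append es).append fs = s.append (es ++ fs) := by
  simp [KState.append]

end KState

section StrongEquiv

variable {Rule Event : Type} {B : KState Rule Event → Set Rule} {EC : Set Event}

theorem strongEquiv_equivalence : Equivalence (StrongEquiv B EC) where
  refl _ _ _ := rfl
  symm h es hes := (h es hes).symm
  trans h₁ h₂ es hes := (h₁ es hes).trans (h₂ es hes)

theorem StrongEquiv.belief_eq {s s' : KState Rule Event} (h : StrongEquiv B EC s s') :
    B s = B s' := by
  simpa using h [] (by simp [InEC])

theorem StrongEquiv.append_singleton {s s' : KState Rule Event} (h : StrongEquiv B EC s s')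
    {E : Event} (hE : E ∈ EC) : StrongEquiv B EC (s.append [E]) (s'.append [E]) := by
  intro es hes
  simpa using h (E :: es) (by simpa [InEC] using ⟨hE, hes⟩)

end StrongEquiv

section Paths

variable {Rule Event : Type} {B : KState Rule Event → Set Rule} {EC : Set Event}

theorem IsPath.mem_dsc {p : ℕ → KState Rule Event} (hp : IsPath (Succ EC) p) (n : ℕ) :
    p n ∈ dsc EC (p 0) := by
  induction n with
  | zero => exact ⟨[], by simp [InEC], by simp⟩
  | succ n ih =>
    obtain ⟨es, hes, hpn⟩ := ih
    obtain ⟨E, hE, hstep⟩ := hp n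
    refine ⟨es ++ [E], ?_, by simp [hstep, hpn]⟩
    simpa [InEC, or_imp, forall_and] using ⟨hes, hE⟩

-- `q` takes at step `n` the event that `p` takes at step `ρ n`.
theorem IsPath.exists_path_strongEquiv_comp {p : ℕ → KState Rule Event}
    (hp : IsPath (Succ EC) p) (ρ : ℕ → ℕ) {s' : KState Rule Event}
    (h₀ : StrongEquiv B EC (p (ρ 0)) s')
    (hρ : ∀ n, StrongEquiv B EC (p (ρ (n + 1))) (p (ρ n + 1))) :
    ∃ q, IsPath (Succ EC) q ∧ q 0 = s' ∧ ∀ n, StrongEquiv B EC (p (ρ n)) (q n) := by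
  choose E hE hpE using hp
  let q : ℕ → KState Rule Event := fun n => Nat.rec s' (fun m qm => qm.append [E (ρ m)]) n
  refine ⟨q, fun n => ⟨E (ρ n), hE (ρ n), rfl⟩, rfl, fun n => ?_⟩
  induction n with
  | zero => exact h₀
  | succ n ih =>
    have hsucc := ih.append_singleton (hE (ρ n))
    rw [← hpE] at hsucc
    exact strongEquiv_equivalence.trans (hρ n) hsucc

theorem StrongEquiv.exists_path {s s' : KState Rule Event} (h : StrongEquiv B EC s s')
    {p : ℕ → KState Rule Event} (hp : IsPath (Succ EC) p) (h₀ : p 0 = s) :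
    ∃ q, IsPath (Succ EC) q ∧ q 0 = s' ∧ ∀ n, StrongEquiv B EC (p n) (q n) :=
  hp.exists_path_strongEquiv_comp id (h₀ ▸ h) fun _ => strongEquiv_equivalence.refl _

theorem IsPath.exists_path_cut {p : ℕ → KState Rule Event} (hp : IsPath (Succ EC) p)
    {j d : ℕ} (h : StrongEquiv B EC (p j) (p (j + d))) :
    ∃ q, IsPath (Succ EC) q ∧ q 0 = p 0 ∧
      ∀ n, StrongEquiv B EC (p (if n < j then n else n + d)) (q n) := by
  refine hp.exists_path_strongEquiv_comp _ ?_ fun n => ?_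
  · rcases Nat.eq_zero_or_pos j with rfl | hj
    · simpa using strongEquiv_equivalence.symm h
    · simpa [hj] using strongEquiv_equivalence.refl _
  · rcases lt_trichotomy (n + 1) j with hn | rfl | hn
    · simpa [hn, show n < j by omega] using strongEquiv_equivalence.refl _
    · simpa [add_right_comm n 1 d] using strongEquiv_equivalence.symm h
    · simpa [show ¬n + 1 < j by omega, show ¬n < j by omega, add_right_comm n 1 d]
        using strongEquiv_equivalence.refl _

theorem IsPath.exists_path_lasso {p : ℕ → KState Rule Event} (hp : IsPath (Succ EC) p)
    {j k : ℕ} (hjk : j < k) (h : StrongEquiv B EC (p j) (p k)) :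
    ∃ q, IsPath (Succ EC) q ∧ q 0 = p 0 ∧ ∀ n, ∃ m < k, StrongEquiv B EC (p m) (q n) := by
  let ρ : ℕ → ℕ := fun n => Nat.rec 0 (fun _ m => if m + 1 = k then j else m + 1) n
  have hρ_succ : ∀ n, ρ (n + 1) = if ρ n + 1 = k then j else ρ n + 1 := fun _ => rfl
  have hρ_lt : ∀ n, ρ n < k := by
    intro n
    induction n with
    | zero => exact Nat.zero_lt_of_lt hjk
    | succ n ih => rw [hρ_succ]; split <;> omega
  obtain ⟨q, hq, hq₀, hpq⟩ := hp.exists_path_strongEquiv_comp ρ (strongEquiv_equivalence.refl _)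
    fun n => by
      rw [hρ_succ]
      split
      · next hk => rwa [hk]
      · exact strongEquiv_equivalence.refl _
  exact ⟨q, hq, hq₀, fun n => ⟨ρ n, hρ_lt n, hpq n⟩⟩

end Paths

mutual

theorem satS_iff_of_strongEquiv {Rule Event : Type} {B : KState Rule Event → Set Rule}
    {EC : Set Event} :
    ∀ (φ : SForm Rule) {s s' : KState Rule Event}, StrongEquiv B EC s s' →
      (SatS (Succ EC) B s φ ↔ SatS (Succ EC) B s' φ)
  | .atom r, _, _, h => by simp only [SatS, h.belief_eq]
  | .conj φ ψ, _, _, h => by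
    simp only [SatS]
    exact and_congr (satS_iff_of_strongEquiv φ h) (satS_iff_of_strongEquiv ψ h)
  | .nnot φ, _, _, h => by
    simp only [SatS]
    exact not_congr (satS_iff_of_strongEquiv φ h)
  | .ex φ, _, _, h => by
    have transfer : ∀ {t t'}, StrongEquiv B EC t t' →
        (∃ p, IsPath (Succ EC) p ∧ p 0 = t ∧ SatE (Succ EC) B p φ) →
        ∃ q, IsPath (Succ EC) q ∧ q 0 = t' ∧ SatE (Succ EC) B q φ := by
      rintro t t' htt' ⟨p, hp, hp₀, hφ⟩
      obtain ⟨q, hq, hq₀, hpq⟩ := htt'.exists_path hp hp₀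
      exact ⟨q, hq, hq₀, (satE_iff_of_strongEquiv φ hpq).mp hφ⟩
    simp only [SatS]
    exact ⟨transfer h, transfer (strongEquiv_equivalence.symm h)⟩
  | .all φ, _, _, h => by
    have transfer : ∀ {t t'}, StrongEquiv B EC t t' →
        (∀ p, IsPath (Succ EC) p → p 0 = t → SatE (Succ EC) B p φ) →
        ∀ q, IsPath (Succ EC) q → q 0 = t' → SatE (Succ EC) B q φ := by
      intro t t' htt' H q hq hq₀
      obtain ⟨p, hp, hp₀, hqp⟩ := (strongEquiv_equivalence.symm htt').exists_path hq hq₀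
      exact (satE_iff_of_strongEquiv φ hqp).mpr (H p hp hp₀)
    simp only [SatS]
    exact ⟨transfer h, transfer (strongEquiv_equivalence.symm h)⟩

theorem satE_iff_of_strongEquiv {Rule Event : Type} {B : KState Rule Event → Set Rule}
    {EC : Set Event} :
    ∀ (φ : EForm Rule) {p q : ℕ → KState Rule Event}, (∀ n, StrongEquiv B EC (p n) (q n)) →
      (SatE (Succ EC) B p φ ↔ SatE (Succ EC) B q φ)
  | .next φ, _, _, h => by
    simp only [SatE]
    exact satS_iff_of_strongEquiv φ (h 1)
  | .untl φ ψ, _, _, h => by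
    simp only [SatE]
    exact exists_congr fun i => and_congr (satS_iff_of_strongEquiv ψ (h i))
      (forall₂_congr fun j _ => satS_iff_of_strongEquiv φ (h j))

end

section Until

variable {Rule Event : Type} (B : KState Rule Event → Set Rule) (EC : Set Event)

def UntilWitness (φ₁ φ₂ : SForm Rule) (p : ℕ → KState Rule Event) (i : ℕ) : Prop :=
  SatS (Succ EC) B (p i) φ₂ ∧ ∀ j < i, SatS (Succ EC) B (p j) φ₁

def RepeatsWithin (s : KState Rule Event) (c : ℕ) : Prop :=
  ∀ p, IsPath (Succ EC) p → p 0 = s → ∃ j k, j < k ∧ k ≤ c ∧ StrongEquiv B EC (p j) (p k)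

variable {B EC}

theorem repeatsWithin_of_ncard_le {s : KState Rule Event} {c : ℕ}
    (hfin : (cls (StrongEquiv B EC) (dsc EC s) '' dsc EC s).Finite)
    (hc : (cls (StrongEquiv B EC) (dsc EC s) '' dsc EC s).ncard ≤ c) :
    RepeatsWithin B EC s c := by
  rintro p hp rfl
  exact exists_lt_le_rel_of_ncard_image_cls_le strongEquiv_equivalence.refl hfin hc hp.mem_dsc

theorem satE_untl_iff {φ₁ φ₂ : SForm Rule} {p : ℕ → KState Rule Event} :
    SatE (Succ EC) B p (.untl φ₁ φ₂) ↔ ∃ i, UntilWitness B EC φ₁ φ₂ p i := by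
  simp only [SatE, UntilWitness]

theorem RepeatsWithin.exists_untilWitness_le {s : KState Rule Event} {c : ℕ}
    (hrep : RepeatsWithin B EC s c) {φ₁ φ₂ : SForm Rule} (i : ℕ) {p : ℕ → KState Rule Event}
    (hp : IsPath (Succ EC) p) (hp₀ : p 0 = s) (hi : UntilWitness B EC φ₁ φ₂ p i) :
    ∃ q, IsPath (Succ EC) q ∧ q 0 = s ∧ ∃ i ≤ c, UntilWitness B EC φ₁ φ₂ q i := by
  induction i using Nat.strong_induction_on generalizing p with
  | _ i ih =>
    by_cases hic : i ≤ c
    · exact ⟨p, hp, hp₀, i, hic, hi⟩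
    obtain ⟨j, k, hjk, hkc, hjk_equiv⟩ := hrep p hp hp₀
    obtain ⟨d, rfl⟩ := Nat.exists_eq_add_of_lt hjk
    obtain ⟨q, hq, hq₀, hpq⟩ := hp.exists_path_cut (d := d + 1) hjk_equiv
    refine ih (i - (d + 1)) (by omega) hq (hq₀.trans hp₀) ⟨?_, fun m hm => ?_⟩
    · have hpqi := hpq (i - (d + 1))
      rw [if_neg (by omega), Nat.sub_add_cancel (by omega)] at hpqi
      exact (satS_iff_of_strongEquiv φ₂ hpqi).mp hi.1
    · refine (satS_iff_of_strongEquiv φ₁ (hpq m)).mp (hi.2 _ ?_)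
      split <;> omega

theorem RepeatsWithin.exists_path_forall_not_untilWitness {s : KState Rule Event} {c : ℕ}
    (hrep : RepeatsWithin B EC s c) {φ₁ φ₂ : SForm Rule} {p : ℕ → KState Rule Event}
    (hp : IsPath (Succ EC) p) (hp₀ : p 0 = s) (hno : ∀ i ≤ c, ¬UntilWitness B EC φ₁ φ₂ p i) :
    ∃ q, IsPath (Succ EC) q ∧ q 0 = s ∧ ∀ i, ¬UntilWitness B EC φ₁ φ₂ q i := by
  by_cases hφ₁ : ∀ m ≤ c, SatS (Succ EC) B (p m) φ₁
  · obtain ⟨j, k, hjk, hkc, hjk_equiv⟩ := hrep p hp hp₀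
    obtain ⟨q, hq, hq₀, hpq⟩ := hp.exists_path_lasso hjk hjk_equiv
    refine ⟨q, hq, hq₀.trans hp₀, fun i hi => ?_⟩
    obtain ⟨m, hmk, hpqm⟩ := hpq i
    exact hno m (by omega)
      ⟨(satS_iff_of_strongEquiv φ₂ hpqm).mpr hi.1, fun l hl => hφ₁ l (by omega)⟩
  · push Not at hφ₁
    obtain ⟨m, hmc, hm⟩ := hφ₁
    refine ⟨p, hp, hp₀, fun i hi => ?_⟩
    rcases lt_or_ge m i with hmi | him
    · exact hm (hi.2 m hmi)
    · exact hno i (by omega) hi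

end Until

/-- If strong equivalence has finite index at most `c` on the
    descendants of `s`, then `E(φ₁ U φ₂)` and `A(φ₁ U φ₂)` at `s` can be decided by
    examining only paths of length at most `c`: some (resp. every) path from `s`
    satisfies `φ₁ U φ₂` iff some (resp. every) path from `s` satisfies it with a
    witness at position at most `c`. -/
theorem until_bounded_paths {Rule Event : Type} (B : KState Rule Event → Set Rule)
    (EC : Set Event) (s : KState Rule Event) (c : ℕ) (φ₁ φ₂ : SForm Rule)
    (hfin : (cls (StrongEquiv B EC) (dsc EC s) '' dsc EC s).Finite)
    (hc : (cls (StrongEquiv B EC) (dsc EC s) '' dsc EC s).ncard ≤ c) :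
    ((∃ p : ℕ → KState Rule Event, IsPath (Succ EC) p ∧ p 0 = s ∧
        SatE (Succ EC) B p (EForm.untl φ₁ φ₂)) ↔
      (∃ p : ℕ → KState Rule Event, IsPath (Succ EC) p ∧ p 0 = s ∧
        ∃ i ≤ c, SatS (Succ EC) B (p i) φ₂ ∧ ∀ j < i, SatS (Succ EC) B (p j) φ₁)) ∧
    ((∀ p : ℕ → KState Rule Event, IsPath (Succ EC) p → p 0 = s →
        SatE (Succ EC) B p (EForm.untl φ₁ φ₂)) ↔
      (∀ p : ℕ → KState Rule Event, IsPath (Succ EC) p → p 0 = s →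
        ∃ i ≤ c, SatS (Succ EC) B (p i) φ₂ ∧ ∀ j < i, SatS (Succ EC) B (p j) φ₁)) := by
  have hrep := repeatsWithin_of_ncard_le hfin hc
  simp only [satE_untl_iff]
  refine ⟨⟨?_, ?_⟩, ⟨fun H p hp hp₀ => ?_, ?_⟩⟩
  · rintro ⟨p, hp, hp₀, i, hi⟩
    exact hrep.exists_untilWitness_le i hp hp₀ hi
  · rintro ⟨p, hp, hp₀, i, -, hi⟩
    exact ⟨p, hp, hp₀, i, hi⟩
  · by_contra hno
    obtain ⟨q, hq, hq₀, hq_no⟩ :=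
      hrep.exists_path_forall_not_untilWitness hp hp₀ fun i hic hi => hno ⟨i, hic, hi⟩
    obtain ⟨i, hi⟩ := H q hq hq₀
    exact hq_no i hi
  · intro H p hp hp₀
    obtain ⟨i, -, hi⟩ := H p hp hp₀
    exact ⟨i, hi⟩
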